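/- arXiv:1908.06300 — 6 statements merged into one kernel-verified Lean document; each statement's English description precedes it below -/
import Mathlib

section
/- Let G be a graph in which no connected component is bipartite, and let w : V → ℝ be edge-induced node weights. Then the maximum of w over all 0/1-vectors x with x(v)+x(w) ≤ 1 for all edges vw equals the maximum of w over all integer vectors x with x(v)+x(w) ≤ 1 for all edges vw. -/
/-!
Write `w(v) = ∑_u c(v,u)` with `c` symmetric, nonnegative and supported on edges. Then
`2 w(x) = ∑_{v,u} c(v,u) (x v + x u)`, so `w(x)` only depends on the edge sums `x v + x u`, and
it is monotone in them. Rounding a feasible integer vector to the indicator of `{v | 1 ≤ x v}`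
keeps it feasible and does not decrease any edge sum, so every integer value is dominated by a
0/1 value, and the two suprema agree.
-/

open Finset

def Int.clip01 (a : ℤ) : ℤ := if 1 ≤ a then 1 else 0

namespace Int

theorem clip01_eq_zero_or_eq_one (a : ℤ) : clip01 a = 0 ∨ clip01 a = 1 := by
  unfold clip01; split_ifs <;> simp

theorem clip01_add_clip01_le_one {a b : ℤ} (h : a + b ≤ 1) : clip01 a + clip01 b ≤ 1 := by
  unfold clip01; split_ifs <;> omega

theorem add_le_clip01_add_clip01 {a b : ℤ} (h : a + b ≤ 1) : a + b ≤ clip01 a + clip01 b := by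
  unfold clip01; split_ifs <;> omega

end Int

section EdgeInduced

variable {V : Type*} [Fintype V]

theorem two_mul_sum_edgeInduced_mul {R : Type*} [CommSemiring R] (c : V → V → R)
    (hcs : ∀ u v, c u v = c v u) (z : V → R) :
    2 * ∑ v, (∑ u, c v u) * z v = ∑ v, ∑ u, c v u * (z v + z u) := by
  have hswap : ∑ v, ∑ u, c v u * z u = ∑ v, ∑ u, c v u * z v := by
    rw [Finset.sum_comm]
    simp_rw [hcs]
  simp_rw [mul_add, Finset.sum_add_distrib, hswap, Finset.sum_mul]
  ring

theorem sum_edgeInduced_mul_le {R : Type*} [Field R] [LinearOrder R] [IsStrictOrderedRing R]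
    (G : SimpleGraph V) (c : V → V → R) (hc0 : ∀ u v, 0 ≤ c u v)
    (hcs : ∀ u v, c u v = c v u) (hcz : ∀ u v, ¬ G.Adj u v → c u v = 0) {x y : V → R}
    (hxy : ∀ v u, G.Adj v u → x v + x u ≤ y v + y u) :
    ∑ v, (∑ u, c v u) * x v ≤ ∑ v, (∑ u, c v u) * y v := by
  have h2 : 2 * ∑ v, (∑ u, c v u) * x v ≤ 2 * ∑ v, (∑ u, c v u) * y v := by
    rw [two_mul_sum_edgeInduced_mul c hcs, two_mul_sum_edgeInduced_mul c hcs]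
    refine Finset.sum_le_sum fun v _ => Finset.sum_le_sum fun u _ => ?_
    by_cases hadj : G.Adj v u
    · exact mul_le_mul_of_nonneg_left (hxy v u hadj) (hc0 v u)
    · simp [hcz v u hadj]
  linarith

end EdgeInduced

theorem max_over_01_eq_max_over_int_general {V : Type*} [Fintype V] (G : SimpleGraph V)
    (w : V → ℝ)
    (hw : ∃ c : V → V → ℝ, (∀ u v, 0 ≤ c u v) ∧ (∀ u v, c u v = c v u) ∧
      (∀ u v, ¬ G.Adj u v → c u v = 0) ∧ (∀ v, w v = ∑ u, c v u)) :
    sSup {t : ℝ | ∃ x : V → ℤ, (∀ v, x v = 0 ∨ x v = 1) ∧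
        (∀ v u : V, G.Adj v u → x v + x u ≤ 1) ∧ t = ∑ v, w v * (x v : ℝ)}
      =
    sSup {t : ℝ | ∃ x : V → ℤ,
        (∀ v u : V, G.Adj v u → x v + x u ≤ 1) ∧ t = ∑ v, w v * (x v : ℝ)} := by
  obtain ⟨c, hc0, hcs, hcz, hwc⟩ := hw
  obtain rfl : w = fun v => ∑ u, c v u := funext hwc
  apply csSup_eq_csSup_of_forall_exists_le
  · rintro t ⟨x, -, hx, rfl⟩
    exact ⟨_, ⟨x, hx, rfl⟩, le_rfl⟩
  · rintro t ⟨x, hx, rfl⟩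
    refine ⟨_, ⟨fun v => Int.clip01 (x v), fun v => Int.clip01_eq_zero_or_eq_one _,
      fun v u hvu => Int.clip01_add_clip01_le_one (hx v u hvu), rfl⟩, ?_⟩
    refine sum_edgeInduced_mul_le G c hc0 hcs hcz fun v u hvu => ?_
    exact_mod_cast Int.add_le_clip01_add_clip01 (hx v u hvu)

/-- If no connected component of `G` is bipartite (i.e. every component contains an
odd closed walk) and `w` is edge-induced, then the maximum of `w` over 0/1-vectors
satisfying all edge constraints equals the maximum over integer vectors satisfying
all edge constraints. -/
theorem max_over_01_eq_max_over_int {V : Type*} [Fintype V] (G : SimpleGraph V)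
    (hnb : ∀ v : V, ∃ u : V, G.Reachable v u ∧ ∃ p : G.Walk u u, Odd p.length)
    (w : V → ℝ)
    (hw : ∃ c : V → V → ℝ, (∀ u v, 0 ≤ c u v) ∧ (∀ u v, c u v = c v u) ∧
      (∀ u v, ¬ G.Adj u v → c u v = 0) ∧ (∀ v, w v = ∑ u, c v u)) :
    sSup {t : ℝ | ∃ x : V → ℤ, (∀ v, x v = 0 ∨ x v = 1) ∧
        (∀ v u : V, G.Adj v u → x v + x u ≤ 1) ∧ t = ∑ v, w v * (x v : ℝ)}
      =
    sSup {t : ℝ | ∃ x : V → ℤ,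
        (∀ v u : V, G.Adj v u → x v + x u ≤ 1) ∧ t = ∑ v, w v * (x v : ℝ)} :=
  max_over_01_eq_max_over_int_general G w hw
end

section
/- Let G be a connected non-bipartite graph and let Σ ⊆ E(G) be a set of edges such that every odd closed walk in G traverses an odd number of edges of Σ (counted with multiplicity). Then there exist nodes v₁,…,v_k ∈ V(G) such that the symmetric difference Σ △ δ(v₁) △ ⋯ △ δ(v_k) equals E(G), where δ(v) denotes the set of edges incident to v. -/
/-!
Weight an edge by `0 ∈ ZMod 2` if it lies in `Σ` and by `1` otherwise. The hypothesis says
that odd closed walks have weight `0`; splicing an odd closed walk into an even one shows that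
every closed walk does, so by connectivity the weight is a coboundary: `w(xy) = g x + g y` for
some `g : V → ZMod 2`. Switching at the vertices of `g⁻¹(1)` toggles exactly the edges of weight
`1`, which are the edges outside `Σ`.
-/

open scoped Classical

theorem List.sum_map_ite_zero_one_eq_length_add_countP {α : Type*} (p : α → Prop)
    [DecidablePred p] (l : List α) :
    (l.map fun a => if p a then (0 : ZMod 2) else 1).sum = l.length + l.countP (p ·) := by
  induction l with
  | nil => simp
  | cons a l ih => by_cases ha : p a <;> simp [ha, ih] <;> grind

namespace SimpleGraph

variable {V : Type*} {G : SimpleGraph V}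

section Potential

variable (c : Sym2 V → ZMod 2)

theorem Preconnected.loop_sum_eq_zero_of_odd_loop (hG : G.Preconnected) {u : V}
    (q : G.Walk u u) (hq : Odd q.length)
    (hc : ∀ (v : V) (p : G.Walk v v), Odd p.length → (p.edges.map c).sum = 0)
    {v : V} (p : G.Walk v v) : (p.edges.map c).sum = 0 := by
  rcases Nat.even_or_odd p.length with hp | hp
  · let t : G.Walk v u := (hG v u).some
    let r : G.Walk v v := t.append (q.append t.reverse)
    have hr : Odd r.length := by
      simpa [r, ← add_assoc, add_right_comm _ q.length, ← two_mul] using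
        (even_two_mul t.length).add_odd hq
    have hpr := hc v (p.append r) (by simpa using hp.add_odd hr)
    simpa [hc v r hr] using hpr
  · exact hc v p hp

theorem Connected.exists_potential_of_loop_sum_eq_zero (hG : G.Connected)
    (hc : ∀ (v : V) (p : G.Walk v v), (p.edges.map c).sum = 0) :
    ∃ g : V → ZMod 2, ∀ x y : V, G.Adj x y → g y = g x + c s(x, y) := by
  obtain ⟨u⟩ := hG.nonempty
  let path (x : V) : G.Walk u x := (hG.preconnected u x).some
  refine ⟨fun x => ((path x).edges.map c).sum, fun x y hxy => ?_⟩
  have := hc u (((path x).concat hxy).append (path y).reverse)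
  simp only [Walk.edges_append, Walk.edges_concat, Walk.edges_reverse, List.map_append,
    List.map_reverse, List.sum_append, List.sum_reverse, List.concat_eq_append,
    List.map_singleton, List.sum_singleton] at this
  exact (CharTwo.add_eq_zero.mp this).symm

end Potential

theorem mem_foldl_symmDiff_incidenceSet_of_adj {l : List V} (hl : l.Nodup)
    (S : Set (Sym2 V)) {x y : V} (h : G.Adj x y) :
    s(x, y) ∈ l.foldl (fun S v => symmDiff S (G.incidenceSet v)) S ↔
      (s(x, y) ∈ S ↔ (x ∈ l ↔ y ∈ l)) := by
  induction l generalizing S with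
  | nil => simp
  | cons v l ih =>
    obtain ⟨hvl, hl⟩ := List.nodup_cons.mp hl
    have hinc : s(x, y) ∈ G.incidenceSet v ↔ v = x ∨ v = y := by
      simp [incidenceSet, h, eq_comm]
    rw [List.foldl_cons, ih hl, Set.mem_symmDiff, hinc, List.mem_cons, List.mem_cons]
    have hne := h.ne
    by_cases hx : v = x <;> by_cases hy : v = y <;> subst_vars <;> tauto

theorem mem_foldl_symmDiff_incidenceSet_of_notMem (l : List V) (S : Set (Sym2 V))
    {e : Sym2 V} (he : e ∉ G.edgeSet) :
    e ∈ l.foldl (fun S v => symmDiff S (G.incidenceSet v)) S ↔ e ∈ S := by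
  induction l generalizing S with
  | nil => rfl
  | cons v l ih =>
    rw [List.foldl_cons, ih, Set.mem_symmDiff]
    simp [incidenceSet, he]

theorem foldl_symmDiff_incidenceSet_eq_edgeSet [Fintype V] {S : Set (Sym2 V)}
    (hS : S ⊆ G.edgeSet) {g : V → ZMod 2}
    (hg : ∀ x y : V, G.Adj x y → g y = g x + if s(x, y) ∈ S then 0 else 1) :
    (Finset.univ.filter (g · = 1)).toList.foldl (fun S v => symmDiff S (G.incidenceSet v)) S =
      G.edgeSet := by
  ext e
  induction e using Sym2.ind with
  | _ x y =>
  by_cases hxy : G.Adj x y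
  · rw [mem_foldl_symmDiff_incidenceSet_of_adj (Finset.nodup_toList _) _ hxy,
      iff_true_intro (G.mem_edgeSet.mpr hxy), iff_true]
    simp only [Finset.mem_toList, Finset.mem_filter, Finset.mem_univ, true_and, hg x y hxy]
    by_cases hs : s(x, y) ∈ S
    · simp [hs]
    · have : ∀ a : ZMod 2, ¬(a = 1 ↔ a + 1 = 1) := by decide
      simpa [hs] using this (g x)
  · rw [mem_foldl_symmDiff_incidenceSet_of_notMem _ _ (G.mem_edgeSet.not.mpr hxy)]
    exact iff_of_false (fun h => hxy (hS h)) hxy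

end SimpleGraph

open SimpleGraph

/-- If `G` is connected and non-bipartite and `Sig ⊆ E(G)` is such that every odd
closed walk traverses an odd number of edges of `Sig``Sig` (with multiplicity), then
some iterated symmetric difference of `Sig``Sig` with stars `δ(v)` equals `E(G)`. -/
theorem signature_switch_to_all_edges {V : Type*} [Fintype V] (G : SimpleGraph V)
    (hconn : G.Connected) (hnb : ∃ (v : V) (p : G.Walk v v), Odd p.length)
    (Sig : Set (Sym2 V)) (hSig : Sig ⊆ G.edgeSet)
    (hodd : ∀ (v : V) (p : G.Walk v v), Odd p.length →
      Odd (p.edges.countP (fun e => decide (e ∈ Sig)))) :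
    ∃ l : List V,
      l.foldl (fun S v => symmDiff S {e ∈ G.edgeSet | v ∈ e}) Sig = G.edgeSet := by
  change ∃ l : List V, l.foldl (fun S v => symmDiff S (G.incidenceSet v)) Sig = G.edgeSet
  obtain ⟨u, q, hq⟩ := hnb
  have hodd_loop (v : V) (p : G.Walk v v) (hp : Odd p.length) :
      (p.edges.map fun e => if e ∈ Sig then (0 : ZMod 2) else 1).sum = 0 := by
    rw [List.sum_map_ite_zero_one_eq_length_add_countP, Walk.length_edges,
      ZMod.natCast_eq_one_iff_odd.mpr hp, ZMod.natCast_eq_one_iff_odd.mpr (hodd v p hp)]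
    decide
  obtain ⟨g, hg⟩ := hconn.exists_potential_of_loop_sum_eq_zero _
    fun v p => hconn.preconnected.loop_sum_eq_zero_of_odd_loop _ q hq hodd_loop p
  exact ⟨_, foldl_symmDiff_incidenceSet_eq_edgeSet hSig hg⟩
end

section
/- Let G be a connected non-bipartite graph with edge-node incidence matrix M, and define σ(x) = 1 − Mx for x ∈ ℝ^V. Then the image σ(ℝ^V) equals the set of vectors y ∈ ℝ^E such that for every even closed walk W = (v₀,e₁,…,e_{2k},v_{2k}=v₀) in G, the alternating sum ∑_{i=1}^{2k} (−1)^{i−1} y(e_i) equals 0. -/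
/-!
Shifting `x` by `1/2` turns `y = 1 - Mx` into `-y = Mx`, so it suffices to describe the image
of the incidence map `x ↦ (vw ↦ x v + x w)`. Along a walk `p` from `u` to `v` the alternating sum
of `Mx` telescopes to `x u - (-1)^|p| x v`, which vanishes on even closed walks. Conversely, fix an
odd closed walk `W` at `v₀` with alternating sum `A`; reading the telescoping formula backwards
forces `x v₀ = A / 2` and `x u = (-1)^|p| (A / 2 - ω_p)` for any walk `p` from `v₀` to `u`. This
is independent of `p` because every closed walk `c` at `v₀` has `ω_c = 0` or `ω_c = A` according
to its parity.
-/

/-- The alternating sum `∑ (−1)^{i−1} y(e_i)` over a list of edges. -/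
def altSum {V : Type*} (y : Sym2 V → ℝ) : List (Sym2 V) → ℝ
  | [] => 0
  | e :: l => y e - altSum y l

lemma neg_one_pow_sq {R : Type*} [Monoid R] [HasDistribNeg R] (n : ℕ) :
    ((-1 : R) ^ n) ^ 2 = 1 := by
  rw [← pow_mul, mul_comm, pow_mul, neg_one_sq, one_pow]

section altSum

variable {V : Type*}

lemma altSum_append (y : Sym2 V → ℝ) (l₁ l₂ : List (Sym2 V)) :
    altSum y (l₁ ++ l₂) = altSum y l₁ + (-1) ^ l₁.length * altSum y l₂ := by
  induction l₁ with
  | nil => simp [altSum]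
  | cons e l ih => simp only [List.cons_append, altSum, ih, List.length_cons, pow_succ]; ring

lemma altSum_reverse (y : Sym2 V → ℝ) (l : List (Sym2 V)) :
    altSum y l.reverse = -(-1) ^ l.length * altSum y l := by
  induction l with
  | nil => simp [altSum]
  | cons e l ih =>
    simp only [List.reverse_cons, altSum_append, ih, altSum, List.length_reverse,
      List.length_cons, pow_succ]
    ring

lemma altSum_neg (y : Sym2 V → ℝ) (l : List (Sym2 V)) : altSum (-y) l = -altSum y l := by
  induction l with
  | nil => simp [altSum]
  | cons e l ih => simp only [altSum, ih, Pi.neg_apply]; ring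

end altSum

namespace SimpleGraph.Walk

variable {V : Type*} {G : SimpleGraph V} (z : Sym2 V → ℝ)

lemma altSum_edges_append {u v w : V} (p : G.Walk u v) (q : G.Walk v w) :
    altSum z (p.append q).edges = altSum z p.edges + (-1) ^ p.length * altSum z q.edges := by
  rw [edges_append, altSum_append, length_edges]

lemma altSum_edges_reverse {u v : V} (p : G.Walk u v) :
    altSum z p.reverse.edges = -(-1) ^ p.length * altSum z p.edges := by
  rw [edges_reverse, altSum_reverse, length_edges]

lemma altSum_edges_concat {u v w : V} (p : G.Walk u v) (h : G.Adj v w) :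
    altSum z (p.concat h).edges = altSum z p.edges + (-1) ^ p.length * z s(v, w) := by
  rw [concat_eq_append, altSum_edges_append]
  simp [altSum]

lemma altSum_edges_of_eq_add {x : V → ℝ} (hz : ∀ v w, G.Adj v w → z s(v, w) = x v + x w)
    {u v : V} (p : G.Walk u v) : altSum z p.edges = x u - (-1) ^ p.length * x v := by
  induction p with
  | nil => simp [altSum]
  | cons h q ih => rw [edges_cons, altSum, ih, hz _ _ h, length_cons, pow_succ]; ring

lemma altSum_edges_eq_zero_of_eq_add {x : V → ℝ}
    (hz : ∀ v w, G.Adj v w → z s(v, w) = x v + x w) {v : V} (p : G.Walk v v)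
    (hp : Even p.length) : altSum z p.edges = 0 := by
  rw [altSum_edges_of_eq_add z hz, hp.neg_one_pow, one_mul, sub_self]

lemma two_mul_altSum_edges_of_closed {v : V}
    (heven : ∀ c : G.Walk v v, Even c.length → altSum z c.edges = 0)
    (W : G.Walk v v) (hW : Odd W.length) (c : G.Walk v v) :
    2 * altSum z c.edges = altSum z W.edges * (1 - (-1) ^ c.length) := by
  rcases Nat.even_or_odd c.length with hc | hc
  · rw [heven c hc, hc.neg_one_pow]; ring
  · have hcW : Even (c.append W.reverse).length := by
      rw [length_append, length_reverse]; exact hc.add_odd hW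
    have h := heven _ hcW
    rw [altSum_edges_append, altSum_edges_reverse, hc.neg_one_pow, hW.neg_one_pow] at h
    rw [hc.neg_one_pow]; linarith

noncomputable def potential (A : ℝ) {v₀ u : V} (p : G.Walk v₀ u) : ℝ :=
  (-1) ^ p.length * (A / 2 - altSum z p.edges)

lemma potential_eq {v₀ u : V}
    (heven : ∀ c : G.Walk v₀ v₀, Even c.length → altSum z c.edges = 0)
    (W : G.Walk v₀ v₀) (hW : Odd W.length) (p q : G.Walk v₀ u) :
    p.potential z (altSum z W.edges) = q.potential z (altSum z W.edges) := by
  have hc := two_mul_altSum_edges_of_closed z heven W hW (p.append q.reverse)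
  rw [altSum_edges_append, altSum_edges_reverse, length_append, length_reverse, pow_add] at hc
  unfold potential
  linear_combination (-(-1) ^ p.length / 2) * hc
    + (-1) ^ q.length * (altSum z W.edges / 2 - altSum z q.edges) *
      neg_one_pow_sq (R := ℝ) p.length

lemma potential_concat (A : ℝ) {v₀ u v : V} (p : G.Walk v₀ u) (h : G.Adj u v) :
    (p.concat h).potential z A = z s(u, v) - p.potential z A := by
  unfold potential
  rw [altSum_edges_concat, length_concat, pow_succ]
  linear_combination z s(u, v) * neg_one_pow_sq (R := ℝ) p.length

end SimpleGraph.Walk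

namespace SimpleGraph

variable {V : Type*} {G : SimpleGraph V} (z : Sym2 V → ℝ)

lemma Connected.exists_eq_add_of_altSum_edges_eq_zero (hconn : G.Connected)
    (hnb : ∃ (v : V) (W : G.Walk v v), Odd W.length)
    (heven : ∀ (v : V) (c : G.Walk v v), Even c.length → altSum z c.edges = 0) :
    ∃ x : V → ℝ, ∀ v w, G.Adj v w → z s(v, w) = x v + x w := by
  obtain ⟨v₀, W, hW⟩ := hnb
  refine ⟨fun u => (hconn.preconnected v₀ u).some.potential z (altSum z W.edges),
    fun a b hab => ?_⟩
  dsimp only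
  rw [Walk.potential_eq z (heven v₀) W hW _ (((hconn.preconnected v₀ a).some).concat hab),
    Walk.potential_concat]
  ring

lemma Connected.exists_eq_add_iff_altSum_edges_eq_zero (hconn : G.Connected)
    (hnb : ∃ (v : V) (W : G.Walk v v), Odd W.length) :
    (∃ x : V → ℝ, ∀ v w, G.Adj v w → z s(v, w) = x v + x w) ↔
      ∀ (v : V) (c : G.Walk v v), Even c.length → altSum z c.edges = 0 :=
  ⟨fun ⟨_, hx⟩ _ c hc => c.altSum_edges_eq_zero_of_eq_add z hx hc,
    hconn.exists_eq_add_of_altSum_edges_eq_zero z hnb⟩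

end SimpleGraph

lemma exists_eq_one_sub_sub_iff_exists_neg_eq_add {V : Type*} (G : SimpleGraph V)
    (y : Sym2 V → ℝ) :
    (∃ x : V → ℝ, ∀ v w, G.Adj v w → y s(v, w) = 1 - x v - x w) ↔
      ∃ x : V → ℝ, ∀ v w, G.Adj v w → (-y) s(v, w) = x v + x w := by
  constructor
  · rintro ⟨x, hx⟩
    exact ⟨fun v => x v - 1 / 2, fun v w h => by rw [Pi.neg_apply, hx v w h]; ring⟩
  · rintro ⟨x, hx⟩
    exact ⟨fun v => x v + 1 / 2, fun v w h => by linarith [hx v w h, Pi.neg_apply y s(v, w)]⟩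

theorem image_sigma_eq_even_walk_kernel_general {V : Type*} (G : SimpleGraph V)
    (hconn : G.Connected) (hnb : ∃ (v : V) (p : G.Walk v v), Odd p.length) :
    {y : Sym2 V → ℝ | (∀ e ∉ G.edgeSet, y e = 0) ∧
        ∃ x : V → ℝ, ∀ v w : V, G.Adj v w → y s(v, w) = 1 - x v - x w}
      =
    {y : Sym2 V → ℝ | (∀ e ∉ G.edgeSet, y e = 0) ∧
        ∀ (v : V) (p : G.Walk v v), Even p.length → altSum y p.edges = 0} := by
  ext y
  refine and_congr_right fun _ => ?_
  rw [exists_eq_one_sub_sub_iff_exists_neg_eq_add,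
    hconn.exists_eq_add_iff_altSum_edges_eq_zero (-y) hnb]
  simp only [altSum_neg, neg_eq_zero]

/-- For a connected non-bipartite graph `G`, the image of `σ(x) = 1 − Mx`
(encoded as functions on `Sym2 V` vanishing off `E(G)`) is exactly the set of
vectors whose alternating sum along every even closed walk vanishes. -/
theorem image_sigma_eq_even_walk_kernel {V : Type*} [Fintype V] (G : SimpleGraph V)
    (hconn : G.Connected) (hnb : ∃ (v : V) (p : G.Walk v v), Odd p.length) :
    {y : Sym2 V → ℝ | (∀ e ∉ G.edgeSet, y e = 0) ∧
        ∃ x : V → ℝ, ∀ v w : V, G.Adj v w → y s(v, w) = 1 - x v - x w}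
      =
    {y : Sym2 V → ℝ | (∀ e ∉ G.edgeSet, y e = 0) ∧
        ∀ (v : V) (p : G.Walk v v), Even p.length → altSum y p.edges = 0} :=
  image_sigma_eq_even_walk_kernel_general G hconn hnb
end

section
/- Let G be a graph embedded in a surface with signature Σ ⊆ E(G), let G′ be the double cover of G with respect to Σ, and let X ⊆ V(G). Then X meets all Σ-even odd closed walks of G if and only if X′ := {v¹, v² : v ∈ X} meets all odd cycles of G′. -/
open scoped Classical

/-- The double cover of `G` with respect to a signature `Sig ⊆ E(G)`:
nodes `v¹, v²` (encoded as `V × Bool`), with the two copies of an edge crossing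
sides exactly when the edge lies in `Sig`. -/
def doubleCover {V : Type*} (G : SimpleGraph V) (Sig : Set (Sym2 V)) :
    SimpleGraph (V × Bool) where
  Adj a b := G.Adj a.1 b.1 ∧ (a.2 = b.2 ↔ s(a.1, b.1) ∉ Sig)
  symm := by
    refine ⟨?_⟩
    rintro ⟨u, i⟩ ⟨v, j⟩ ⟨h1, h2⟩
    refine ⟨h1.symm, ?_⟩
    rw [Sym2.eq_swap]
    exact (eq_comm).trans h2
  loopless := by
    refine ⟨?_⟩
    rintro ⟨u, i⟩ ⟨h1, _⟩
    exact G.irrefl h1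

/-!
The projection `(v, i) ↦ v` maps walks of the double cover to walks of `G`, and every walk of `G`
lifts to the double cover from either side. Along a lift the side flips exactly at the edges of
`Sig`, so a closed walk of `G` lifts to a closed walk iff it is `Sig`-even; lengths and (projected)
supports are preserved. Since every odd closed walk contains an odd cycle on its support, hitting
all odd cycles of the double cover is the same as hitting all lifts of `Sig`-even odd closed walks.
-/

namespace SimpleGraph.Walk

variable {W : Type*} {H : SimpleGraph W}

theorem exists_isCycle_odd_length_support_subset {v : W} (p : H.Walk v v) (hp : Odd p.length) :
    ∃ (u : W) (c : H.Walk u u), c.IsCycle ∧ Odd c.length ∧ c.support ⊆ p.support := by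
  induction hn : p.length using Nat.strong_induction_on generalizing v with
  | _ n ih =>
  cases p with
  | nil => simp at hp
  | cons h r =>
    by_cases hr : r.IsPath
    · refine ⟨v, cons h r, (cons_isCycle_iff r h).mpr ⟨hr, fun he => ?_⟩, hp, List.Subset.refl _⟩
      rw [length_cons, hr.length_eq_one_of_mem_edges (Sym2.eq_swap ▸ he)] at hp
      exact Nat.not_odd_iff_even.mpr even_two hp
    -- A closed subwalk `w` of `r` splits `p` into two shorter closed walks, `w` and `p` with `w`
    -- cut out; one of them is odd.
    obtain ⟨x, w, hsub, hw⟩ : ∃ (x : W) (w : H.Walk x x), w.IsSubwalk r ∧ ¬w.Nil := by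
      simpa [isPath_iff_isSubwalk_imp_nil] using hr
    have hw_sub : w.support ⊆ (cons h r).support :=
      List.subset_cons_of_subset _ hsub.support_subset
    obtain ⟨ru, rv, rfl⟩ := hsub
    have hw_pos : 0 < w.length := not_nil_iff_lt_length.mp hw
    have hlen : n = w.length + (cons h (ru.append rv)).length := by
      simp only [← hn, length_cons, length_append]
      omega
    rcases Nat.even_or_odd w.length with hw_even | hw_odd
    · have hodd : Odd (cons h (ru.append rv)).length := by
        rw [hn, hlen, Nat.odd_add'] at hp
        exact hp.mpr hw_even
      obtain ⟨u, c, hc, hc_odd, hc_sub⟩ := ih _ (by omega) _ hodd rfl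
      refine ⟨u, c, hc, hc_odd, List.Subset.trans hc_sub fun y => ?_⟩
      simp only [support_cons, support_append, List.mem_cons, List.mem_append]
      tauto
    · obtain ⟨u, c, hc, hc_odd, hc_sub⟩ := ih _ (by simp [hlen]) w hw_odd rfl
      exact ⟨u, c, hc, hc_odd, List.Subset.trans hc_sub hw_sub⟩

end SimpleGraph.Walk

namespace doubleCover

open SimpleGraph

variable {V : Type*} {G : SimpleGraph V} {Sig : Set (Sym2 V)}

variable (G Sig) in
def proj : doubleCover G Sig →g G := ⟨Prod.fst, And.left⟩

@[simp]
theorem proj_apply (a : V × Bool) : proj G Sig a = a.1 := rfl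

theorem mem_support_map_proj_iff {a b : V × Bool} {q : (doubleCover G Sig).Walk a b} {u : V} :
    u ∈ (q.map (proj G Sig)).support ↔ ∃ c ∈ q.support, c.1 = u := by
  rw [Walk.support_map, List.mem_map]
  simp only [proj_apply]

theorem even_countP_edges_map_proj_iff {a b : V × Bool} (q : (doubleCover G Sig).Walk a b) :
    Even ((q.map (proj G Sig)).edges.countP (fun e => decide (e ∈ Sig))) ↔ a.2 = b.2 := by
  induction q with
  | nil => simp
  | @cons a c b h q ih =>
    have hedges : ((Walk.cons h q).map (proj G Sig)).edges =
        s(a.1, c.1) :: (q.map (proj G Sig)).edges := rfl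
    have hside : a.2 = c.2 ↔ s(a.1, c.1) ∉ Sig := h.2
    rw [hedges, List.countP_cons]
    by_cases hm : s(a.1, c.1) ∈ Sig
    · have hac : a.2 ≠ c.2 := fun he => hside.mp he hm
      simp only [hm, decide_true, if_true, Nat.even_add_one, ih]
      revert hac
      cases a.2 <;> cases b.2 <;> cases c.2 <;> simp
    · simp only [hm, decide_false, Bool.false_eq_true, if_false, Nat.add_zero, ih, hside.mpr hm]

theorem exists_walk_map_proj_eq {u v : V} (p : G.Walk u v) (i : Bool) :
    ∃ (j : Bool) (q : (doubleCover G Sig).Walk (u, i) (v, j)), q.map (proj G Sig) = p := by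
  induction p generalizing i with
  | nil => exact ⟨i, .nil, rfl⟩
  | @cons u w v h p ih =>
    let i' := xor i (decide (s(u, w) ∈ Sig))
    have hadj : (doubleCover G Sig).Adj (u, i) (w, i') :=
      ⟨h, by by_cases hm : s(u, w) ∈ Sig <;> simp [i', hm]⟩
    obtain ⟨j, q, hq⟩ := ih i'
    exact ⟨j, .cons hadj q, by simp [hq]⟩

end doubleCover

theorem transversal_iff_double_cover_general {V : Type*} (G : SimpleGraph V)
    (Sig : Set (Sym2 V)) (X : Set V) :
    (∀ (v : V) (p : G.Walk v v), Odd p.length →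
        Even (p.edges.countP (fun e => decide (e ∈ Sig))) →
        ∃ u ∈ p.support, u ∈ X)
      ↔
    (∀ (a : V × Bool) (q : (doubleCover G Sig).Walk a a), q.IsCycle →
        Odd q.length → ∃ b ∈ q.support, b.1 ∈ X) := by
  constructor
  · intro hX a q _ hodd
    obtain ⟨u, hu, huX⟩ := hX a.1 (q.map (doubleCover.proj G Sig)) (q.length_map _ ▸ hodd)
      ((doubleCover.even_countP_edges_map_proj_iff q).mpr rfl)
    obtain ⟨b, hb, rfl⟩ := doubleCover.mem_support_map_proj_iff.mp hu
    exact ⟨b, hb, huX⟩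
  · intro hX v p hodd heven
    obtain ⟨j, q, rfl⟩ := doubleCover.exists_walk_map_proj_eq (Sig := Sig) p false
    obtain rfl : false = j := (doubleCover.even_countP_edges_map_proj_iff q).mp heven
    obtain ⟨a, c, hc, hc_odd, hc_sub⟩ :=
      q.exists_isCycle_odd_length_support_subset (q.length_map _ ▸ hodd)
    obtain ⟨b, hb, hbX⟩ := hX a c hc hc_odd
    exact ⟨b.1, doubleCover.mem_support_map_proj_iff.mpr ⟨b, hc_sub hb, rfl⟩, hbX⟩

/-- A set `X` of nodes meets all `Sig`-even odd closed walks of `G` iff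
`X' = {v¹, v² : v ∈ X}` meets all odd cycles of the double cover. -/
theorem transversal_iff_double_cover {V : Type*} (G : SimpleGraph V)
    (Sig : Set (Sym2 V)) (hSig : Sig ⊆ G.edgeSet) (X : Set V) :
    (∀ (v : V) (p : G.Walk v v), Odd p.length →
        Even (p.edges.countP (fun e => decide (e ∈ Sig))) →
        ∃ u ∈ p.support, u ∈ X)
      ↔
    (∀ (a : V × Bool) (q : (doubleCover G Sig).Walk a a), q.IsCycle →
        Odd q.length → ∃ b ∈ q.support, b.1 ∈ X) :=
  transversal_iff_double_cover_general G Sig X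
end

section
/- For any finite collection of polyhedra P₁, …, P_t in ℝⁿ with identical recession cones, the convex hull of their union P = conv(P₁ ∪ ⋯ ∪ P_t) is a polyhedron satisfying xc(P) ≤ ∑_{i=1}^t xc(P_i) + t, where xc denotes the minimum number of inequalities in an extended formulation. -/
/-!
The convex hull of `P₁ ∪ ⋯ ∪ P_t` is the projection `x = ∑ χᵢ` of Balas' lifted set of
`(χ, y, w)` with `Aᵢ χᵢ + Bᵢ yᵢ ≤ wᵢ bᵢ`, `w ≥ 0` and `∑ wᵢ = 1`. A block with `wᵢ > 0` contributes
the point `wᵢ⁻¹ χᵢ ∈ Pᵢ` with weight `wᵢ`; a block with `wᵢ = 0` is a recession direction of `Pᵢ`,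
hence of every `Pⱼ`, and translating the convex hull by it does not leave it. The equations
`x = ∑ χᵢ`, `∑ wᵢ = 1` cost no inequalities: they cut out a fibre of the linear surjection
`(χ, y, w) ↦ (∑ χᵢ, ∑ wᵢ)`, which is parametrized by its kernel, so `∑ mᵢ + t` inequalities
remain. Polyhedrality then follows by Fourier–Motzkin elimination of the auxiliary variables.
-/

open Finset

/-- `P` admits an extended formulation with `m` inequalities. -/
def IsEF {n : ℕ} (P : Set (Fin n → ℝ)) (m : ℕ) : Prop :=
  ∃ (k : ℕ) (A : Matrix (Fin m) (Fin n) ℝ) (B : Matrix (Fin m) (Fin k) ℝ)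
    (b : Fin m → ℝ),
    P = {x | ∃ y : Fin k → ℝ, ∀ i, A.mulVec x i + B.mulVec y i ≤ b i}

/-- The extension complexity of `P`: the minimum number of inequalities in an
extended formulation of `P`. -/
noncomputable def xc {n : ℕ} (P : Set (Fin n → ℝ)) : ℕ := sInf {m | IsEF P m}

/-- `P` is a polyhedron. -/
def IsPolyhedron {n : ℕ} (P : Set (Fin n → ℝ)) : Prop :=
  ∃ (m : ℕ) (A : Matrix (Fin m) (Fin n) ℝ) (b : Fin m → ℝ),
    P = {x | ∀ i, A.mulVec x i ≤ b i}

/-- The recession cone of `P`. -/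
def recCone {n : ℕ} (P : Set (Fin n → ℝ)) : Set (Fin n → ℝ) :=
  {r | ∀ x ∈ P, ∀ l : ℝ, 0 ≤ l → x + l • r ∈ P}

open Matrix
open scoped Pointwise

section Polyhedral

variable {V W : Type*} [AddCommGroup V] [Module ℝ V] [AddCommGroup W] [Module ℝ W]

def IsPolyhedralSet (S : Set V) : Prop :=
  ∃ (ι : Type) (_ : Fintype ι) (F : V →ₗ[ℝ] ι → ℝ) (c : ι → ℝ), S = {v | F v ≤ c}

theorem IsPolyhedralSet.preimage {S : Set V} (hS : IsPolyhedralSet S) (L : W →ₗ[ℝ] V) :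
    IsPolyhedralSet (L ⁻¹' S) := by
  obtain ⟨ι, _, F, c, rfl⟩ := hS
  exact ⟨ι, inferInstance, F ∘ₗ L, c, rfl⟩

theorem exists_smul_le {ι : Type*} [Fintype ι] (a u : ι → ℝ) (hzero : ∀ i, a i = 0 → 0 ≤ u i)
    (hpair : ∀ i j, 0 < a i → a j < 0 → 0 ≤ -a j * u i + a i * u j) :
    ∃ s : ℝ, s • a ≤ u := by
  set r : ι → ℝ := fun i => u i / a i
  have hr : ∀ i j, 0 < a i → a j < 0 → r j ≤ r i := by
    intro i j hi hj
    simp only [r]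
    rw [div_le_iff_of_neg hj, div_mul_eq_mul_div, div_le_iff₀ hi]
    linarith [hpair i j hi hj]
  obtain ⟨s, hlow, hup⟩ : ∃ s, (∀ j, a j < 0 → r j ≤ s) ∧ ∀ i, 0 < a i → s ≤ r i := by
    rcases (univ.filter (a · < 0)).eq_empty_or_nonempty with hneg | hneg
    · obtain ⟨s, hs⟩ := (Set.finite_range r).bddBelow
      refine ⟨s, fun j hj => ?_, fun i _ => hs ⟨i, rfl⟩⟩
      simpa [hj] using Finset.filter_eq_empty_iff.1 hneg (Finset.mem_univ j)
    · obtain ⟨j₀, hj₀, hmax⟩ := Finset.exists_max_image _ r hneg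
      exact ⟨r j₀, fun j hj => hmax j (by simpa using hj),
        fun i hi => hr i j₀ hi (by simpa using hj₀)⟩
  refine ⟨s, fun i => ?_⟩
  rw [Pi.smul_apply, smul_eq_mul]
  rcases lt_trichotomy (a i) 0 with hi | hi | hi
  · exact (div_le_iff_of_neg hi).1 (hlow i hi)
  · simpa [hi] using hzero i hi
  · exact (le_div_iff₀ hi).1 (hup i hi)

/-- Fourier–Motzkin: keep the rows not involving `s`, and eliminate `s` from every pair of rows in
which it has coefficients of opposite signs. -/
theorem IsPolyhedralSet.image_fst {S : Set (V × ℝ)} (hS : IsPolyhedralSet S) :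
    IsPolyhedralSet (Prod.fst '' S) := by
  obtain ⟨ι, _, F, c, rfl⟩ := hS
  set a : ι → ℝ := F (0, 1)
  set g : V →ₗ[ℝ] ι → ℝ := F ∘ₗ LinearMap.inl ℝ V ℝ
  have hF : ∀ x s, F (x, s) = g x + s • a := by
    intro x s
    have hxs : (x, s) = LinearMap.inl ℝ V ℝ x + s • (0, 1) := by simp
    rw [hxs, map_add, map_smul]
    rfl
  let Z := {i // a i = 0}
  let Q := {p : ι × ι // 0 < a p.1 ∧ a p.2 < 0}
  refine ⟨Z ⊕ Q, inferInstance,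
    LinearMap.pi (Sum.elim (fun i => LinearMap.proj i.1 ∘ₗ g)
      (fun p => -a p.1.2 • LinearMap.proj p.1.1 ∘ₗ g + a p.1.1 • LinearMap.proj p.1.2 ∘ₗ g)),
    Sum.elim (fun i => c i.1) (fun p => -a p.1.2 * c p.1.1 + a p.1.1 * c p.1.2), ?_⟩
  ext x
  simp only [Set.mem_image, Set.mem_ofPred_eq, Prod.exists, exists_and_right, exists_eq_right, hF,
    ← le_sub_iff_add_le']
  constructor
  · rintro ⟨s, hs⟩ (⟨i, hi⟩ | ⟨⟨i, j⟩, hi, hj⟩)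
    · simpa [hi] using hs i
    · have hsi := hs i
      have hsj := hs j
      simp only [Pi.smul_apply, Pi.sub_apply, smul_eq_mul] at hsi hsj
      simp only [LinearMap.pi_apply, Sum.elim_inr, LinearMap.add_apply, LinearMap.smul_apply,
        LinearMap.comp_apply, LinearMap.proj_apply, smul_eq_mul]
      nlinarith
  · intro h
    refine exists_smul_le a (c - g x) (fun i hi => ?_) (fun i j hi hj => ?_)
    · simpa using h (.inl ⟨i, hi⟩)
    · have := h (.inr ⟨(i, j), hi, hj⟩)
      simp only [LinearMap.pi_apply, Sum.elim_inr, LinearMap.add_apply, LinearMap.smul_apply,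
        LinearMap.comp_apply, LinearMap.proj_apply, smul_eq_mul] at this
      simp only [Pi.sub_apply]
      linarith

theorem IsPolyhedralSet.image_fst_pi :
    ∀ {k : ℕ} {S : Set (V × (Fin k → ℝ))}, IsPolyhedralSet S → IsPolyhedralSet (Prod.fst '' S)
  | 0, S, hS => by
    convert hS.preimage (LinearMap.inl ℝ V (Fin 0 → ℝ)) using 1
    ext x
    simp only [Set.mem_image, Set.mem_preimage, Prod.exists, exists_and_right, exists_eq_right,
      LinearMap.inl_apply]
    exact ⟨fun ⟨y, hy⟩ => by rwa [Subsingleton.elim y 0] at hy, fun h => ⟨0, h⟩⟩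
  | k + 1, S, hS => by
    let Φ : (V × (Fin k → ℝ)) × ℝ →ₗ[ℝ] V × (Fin (k + 1) → ℝ) :=
      (LinearMap.fst ℝ V _ ∘ₗ LinearMap.fst ℝ _ ℝ).prod
        ((LinearMap.snd ℝ _ ℝ).vecCons (LinearMap.snd ℝ V _ ∘ₗ LinearMap.fst ℝ _ ℝ))
    convert (hS.preimage Φ).image_fst.image_fst_pi using 1
    ext x
    constructor
    · rintro ⟨⟨x, y⟩, hy, rfl⟩
      refine ⟨(x, Matrix.vecTail y), ⟨((x, Matrix.vecTail y), Matrix.vecHead y), ?_, rfl⟩, rfl⟩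
      simpa [Φ, Matrix.cons_head_tail] using hy
    · rintro ⟨_, ⟨z, hz, rfl⟩, rfl⟩
      exact ⟨Φ z, hz, rfl⟩

end Polyhedral

theorem funCongrLeft_le_funCongrLeft_iff {ι κ : Type*} (e : κ ≃ ι) {u v : ι → ℝ} :
    LinearEquiv.funCongrLeft ℝ ℝ e u ≤ LinearEquiv.funCongrLeft ℝ ℝ e v ↔ u ≤ v :=
  e.forall_congr_right (q := fun i => u i ≤ v i)

theorem IsPolyhedralSet.isPolyhedron {n : ℕ} {P : Set (Fin n → ℝ)} (hP : IsPolyhedralSet P) :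
    IsPolyhedron P := by
  obtain ⟨ι, _, F, c, rfl⟩ := hP
  let R := LinearEquiv.funCongrLeft ℝ ℝ (Fintype.equivFin ι).symm
  refine ⟨_, LinearMap.toMatrix' (R.toLinearMap ∘ₗ F), R c, ?_⟩
  ext x
  simp only [Set.mem_ofPred_eq, LinearMap.toMatrix'_mulVec, LinearMap.comp_apply,
    LinearEquiv.coe_coe]
  exact (funCongrLeft_le_funCongrLeft_iff _).symm

theorem IsEF.isPolyhedron {n m : ℕ} {P : Set (Fin n → ℝ)} (h : IsEF P m) : IsPolyhedron P := by
  obtain ⟨k, A, B, b, rfl⟩ := h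
  have hlift : IsPolyhedralSet
      {z : (Fin n → ℝ) × (Fin k → ℝ) | A.mulVecLin.coprod B.mulVecLin z ≤ b} :=
    ⟨Fin m, inferInstance, _, b, rfl⟩
  convert hlift.image_fst_pi.isPolyhedron using 1
  ext x
  simp [Pi.le_def]

theorem IsPolyhedron.exists_isEF {n : ℕ} {P : Set (Fin n → ℝ)} (h : IsPolyhedron P) :
    ∃ m, IsEF P m := by
  obtain ⟨m, A, b, rfl⟩ := h
  exact ⟨m, 0, A, 0, b, by simp⟩

theorem IsPolyhedron.isEF_xc {n : ℕ} {P : Set (Fin n → ℝ)} (h : IsPolyhedron P) : IsEF P (xc P) :=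
  Nat.sInf_mem h.exists_isEF

section ExtendedFormulation

variable {n : ℕ} {ι V W : Type*} [Fintype ι] [AddCommGroup V] [Module ℝ V] [FiniteDimensional ℝ V]
  [AddCommGroup W] [Module ℝ W]

theorem isEF_of_linearMap (F : (Fin n → ℝ) →ₗ[ℝ] ι → ℝ) (G : V →ₗ[ℝ] ι → ℝ) (c : ι → ℝ) :
    IsEF {x | ∃ y, F x + G y ≤ c} (Fintype.card ι) := by
  let e := (Module.finBasis ℝ V).equivFun
  let R := LinearEquiv.funCongrLeft ℝ ℝ (Fintype.equivFin ι).symm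
  refine ⟨Module.finrank ℝ V, LinearMap.toMatrix' (R.toLinearMap ∘ₗ F),
    LinearMap.toMatrix' (R.toLinearMap ∘ₗ G ∘ₗ e.symm.toLinearMap), R c, ?_⟩
  ext x
  simp only [Set.mem_ofPred_eq]
  refine (e.symm.surjective.exists (p := fun y => F x + G y ≤ c)).trans (exists_congr fun y => ?_)
  rw [← funCongrLeft_le_funCongrLeft_iff (Fintype.equivFin ι).symm, map_add]
  simp only [LinearMap.toMatrix'_mulVec, LinearMap.comp_apply, LinearEquiv.coe_coe]
  rfl

theorem isEF_of_surjective (G : V →ₗ[ℝ] ι → ℝ) (c : ι → ℝ) (L : V →ₗ[ℝ] W)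
    (hL : Function.Surjective L) (ψ : (Fin n → ℝ) →ₗ[ℝ] W) (w₀ : W) :
    IsEF {x | ∃ v, G v ≤ c ∧ L v = ψ x + w₀} (Fintype.card ι) := by
  obtain ⟨s, hs⟩ := L.exists_rightInverse_of_surjective (LinearMap.range_eq_top.2 hL)
  have hLs : ∀ w, L (s w) = w := fun w => LinearMap.congr_fun hs w
  convert isEF_of_linearMap (G ∘ₗ s ∘ₗ ψ) (G ∘ₗ (LinearMap.ker L).subtype) (c - G (s w₀)) using 1
  ext x
  simp only [Set.mem_ofPred_eq, LinearMap.comp_apply, Submodule.coe_subtype, Subtype.exists,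
    LinearMap.mem_ker, exists_prop, le_sub_iff_add_le]
  constructor
  · rintro ⟨v, hv, hLv⟩
    refine ⟨v - s (ψ x + w₀), by simp [hLv, hLs], ?_⟩
    convert hv using 1
    simp only [map_add, map_sub]
    abel
  · rintro ⟨w, hw, hGw⟩
    refine ⟨s (ψ x + w₀) + w, ?_, by simp [hLs, hw]⟩
    convert hGw using 1
    simp only [map_add]
    abel

end ExtendedFormulation

section RecessionCone

variable {n : ℕ}

theorem zero_mem_recCone (P : Set (Fin n → ℝ)) : 0 ∈ recCone P := by
  intro x hx l _
  simpa using hx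

theorem add_mem_recCone {P : Set (Fin n → ℝ)} {r r' : Fin n → ℝ} (hr : r ∈ recCone P)
    (hr' : r' ∈ recCone P) : r + r' ∈ recCone P := by
  intro x hx l hl
  simpa [smul_add, add_assoc] using hr' _ (hr x hx l hl) l hl

theorem sum_mem_recCone {ι : Type*} {P : Set (Fin n → ℝ)} (s : Finset ι) {r : ι → Fin n → ℝ}
    (hr : ∀ i ∈ s, r i ∈ recCone P) : ∑ i ∈ s, r i ∈ recCone P :=
  Finset.sum_induction r (· ∈ recCone P) (fun _ _ => add_mem_recCone) (zero_mem_recCone P) hr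

theorem add_mem_convexHull_iUnion {ι : Type*} {P : ι → Set (Fin n → ℝ)} {z r : Fin n → ℝ}
    (hz : z ∈ convexHull ℝ (⋃ i, P i)) (hr : ∀ i, r ∈ recCone (P i)) :
    z + r ∈ convexHull ℝ (⋃ i, P i) := by
  have htranslate : (⋃ i, P i) + ({r} : Set (Fin n → ℝ)) ⊆ ⋃ i, P i := by
    rintro _ ⟨x, hx, _, rfl, rfl⟩
    obtain ⟨i, hi⟩ := Set.mem_iUnion.1 hx
    exact Set.mem_iUnion.2 ⟨i, by simpa using hr i x hi 1 zero_le_one⟩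
  apply convexHull_mono htranslate
  rw [convexHull_add, convexHull_singleton]
  exact Set.add_mem_add hz rfl

variable {m k : ℕ} {P : Set (Fin n → ℝ)} {A : Matrix (Fin m) (Fin n) ℝ}
  {B : Matrix (Fin m) (Fin k) ℝ} {b : Fin m → ℝ}

theorem inv_smul_mem_of_mulVec_le_smul (hP : P = {x | ∃ y, A *ᵥ x + B *ᵥ y ≤ b})
    {χ : Fin n → ℝ} {y : Fin k → ℝ} {w : ℝ} (hw : 0 < w) (h : A *ᵥ χ + B *ᵥ y ≤ w • b) :
    w⁻¹ • χ ∈ P := by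
  rw [hP]
  refine ⟨w⁻¹ • y, ?_⟩
  calc A *ᵥ (w⁻¹ • χ) + B *ᵥ (w⁻¹ • y) = w⁻¹ • (A *ᵥ χ + B *ᵥ y) := by
        simp only [Matrix.mulVec_smul, smul_add]
    _ ≤ w⁻¹ • (w • b) := smul_le_smul_of_nonneg_left h (inv_nonneg.2 hw.le)
    _ = b := inv_smul_smul₀ hw.ne' b

theorem mem_recCone_of_mulVec_le_zero (hP : P = {x | ∃ y, A *ᵥ x + B *ᵥ y ≤ b})
    {χ : Fin n → ℝ} {y : Fin k → ℝ} (h : A *ᵥ χ + B *ᵥ y ≤ 0) : χ ∈ recCone P := by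
  intro x hx l hl
  rw [hP] at hx ⊢
  obtain ⟨y₀, hy₀⟩ := hx
  refine ⟨y₀ + l • y, ?_⟩
  calc A *ᵥ (x + l • χ) + B *ᵥ (y₀ + l • y) = (A *ᵥ x + B *ᵥ y₀) + l • (A *ᵥ χ + B *ᵥ y) := by
        simp only [Matrix.mulVec_add, Matrix.mulVec_smul, smul_add]
        abel
    _ ≤ b + l • 0 := add_le_add hy₀ (smul_le_smul_of_nonneg_left h hl)
    _ = b := by rw [smul_zero, add_zero]

end RecessionCone

section Balas

variable {n t : ℕ} {m k : Fin t → ℕ} (A : ∀ i, Matrix (Fin (m i)) (Fin n) ℝ)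
  (B : ∀ i, Matrix (Fin (m i)) (Fin (k i)) ℝ) (b : ∀ i, Fin (m i) → ℝ)

/-- The homogenized lifted systems: `balasMap A B b (χ, y, w) ≤ 0` says that each `(χ i, y i)`
lies in `w i` times the `i`-th lifted polyhedron (in its recession cone when `w i = 0`). -/
def balasMap : (Fin t → Fin n → ℝ) × (∀ i, Fin (k i) → ℝ) × (Fin t → ℝ) →ₗ[ℝ]
    ((Σ i, Fin (m i)) ⊕ Fin t → ℝ) where
  toFun z := Sum.elim (fun p => (A p.1 *ᵥ z.1 p.1 + B p.1 *ᵥ z.2.1 p.1 - z.2.2 p.1 • b p.1) p.2)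
    (fun i => -z.2.2 i)
  map_add' z z' := by
    ext (p | i)
    · simp only [Prod.fst_add, Prod.snd_add, Pi.add_apply, Matrix.mulVec_add, add_smul,
        Sum.elim_inl, Pi.sub_apply]
      ring
    · simp only [Prod.snd_add, Pi.add_apply, Sum.elim_inr]
      ring
  map_smul' r z := by
    ext (p | i)
    · simp only [Prod.smul_fst, Prod.smul_snd, Pi.smul_apply, Matrix.mulVec_smul, smul_eq_mul,
        Sum.elim_inl, Pi.sub_apply, Pi.add_apply, RingHom.id_apply, mul_smul]
      ring
    · simp [Sum.elim_inr]

def balasCone : Set ((Fin t → Fin n → ℝ) × (∀ i, Fin (k i) → ℝ) × (Fin t → ℝ)) :=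
  {z | balasMap A B b z ≤ 0}

def balasProj : (Fin t → Fin n → ℝ) × (∀ i, Fin (k i) → ℝ) × (Fin t → ℝ) →ₗ[ℝ]
    (Fin n → ℝ) × ℝ :=
  ((∑ i, LinearMap.proj i) ∘ₗ LinearMap.fst ℝ _ _).prod
    ((∑ i, LinearMap.proj i) ∘ₗ LinearMap.snd ℝ _ _ ∘ₗ LinearMap.snd ℝ _ _)

def balasSet : Set (Fin n → ℝ) :=
  {x | ∃ z ∈ balasCone A B b, balasProj (k := k) z = (x, 1)}

variable {A B b}

theorem mem_balasCone {χ : Fin t → Fin n → ℝ} {y : ∀ i, Fin (k i) → ℝ} {w : Fin t → ℝ} :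
    (χ, y, w) ∈ balasCone A B b ↔ ∀ i, A i *ᵥ χ i + B i *ᵥ y i ≤ w i • b i ∧ 0 ≤ w i := by
  simp only [balasCone, balasMap, Set.mem_ofPred_eq, LinearMap.coe_mk, AddHom.coe_mk, Pi.le_def,
    Sum.forall, Sigma.forall, Sum.elim_inl, Sum.elim_inr, Pi.zero_apply, Pi.sub_apply,
    sub_nonpos, neg_nonpos, forall_and]

theorem balasProj_apply (χ : Fin t → Fin n → ℝ) (y : ∀ i, Fin (k i) → ℝ) (w : Fin t → ℝ) :
    balasProj (χ, y, w) = (∑ i, χ i, ∑ i, w i) := by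
  simp [balasProj]

theorem balasProj_surjective (ht : 1 ≤ t) : Function.Surjective (balasProj (n := n) (k := k)) := by
  rintro ⟨x, s⟩
  exact ⟨(Pi.single ⟨0, ht⟩ x, 0, Pi.single ⟨0, ht⟩ s), by simp [balasProj_apply]⟩

theorem convex_balasSet : Convex ℝ (balasSet A B b) := by
  rintro x ⟨z, hz, hzx⟩ x' ⟨z', hz', hzx'⟩ a a' ha ha' haa'
  refine ⟨a • z + a' • z', ?_, ?_⟩
  · simp only [balasCone, Set.mem_ofPred_eq, map_add, map_smul] at hz hz' ⊢
    exact add_nonpos (smul_nonpos_of_nonneg_of_nonpos ha hz)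
      (smul_nonpos_of_nonneg_of_nonpos ha' hz')
  · simp [hzx, hzx', haa']

variable {P : Fin t → Set (Fin n → ℝ)}

theorem subset_balasSet (hP : ∀ i, P i = {x | ∃ y, A i *ᵥ x + B i *ᵥ y ≤ b i}) (i : Fin t) :
    P i ⊆ balasSet A B b := by
  intro x hx
  rw [hP i] at hx
  obtain ⟨y, hy⟩ := hx
  refine ⟨(Pi.single i x, Pi.single i y, Pi.single i 1), mem_balasCone.2 fun j => ?_, by
    simp [balasProj_apply]⟩
  rcases eq_or_ne j i with rfl | hj
  · simpa using hy
  · simp [hj]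

theorem balasSet_subset_convexHull (hP : ∀ i, P i = {x | ∃ y, A i *ᵥ x + B i *ᵥ y ≤ b i})
    (hrec : ∀ i j, recCone (P i) = recCone (P j)) :
    balasSet A B b ⊆ convexHull ℝ (⋃ i, P i) := by
  rintro x ⟨⟨χ, y, w⟩, hz, hzx⟩
  rw [mem_balasCone] at hz
  rw [balasProj_apply, Prod.mk.injEq] at hzx
  obtain ⟨rfl, hw⟩ := hzx
  have hpos : ∑ i with 0 < w i, w i = 1 := by
    rw [Finset.sum_filter_of_ne fun i _ hi => (hz i).2.lt_of_ne' hi, hw]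
  have hhull : ∑ i with 0 < w i, χ i ∈ convexHull ℝ (⋃ i, P i) := by
    have : ∑ i with 0 < w i, χ i = ∑ i with 0 < w i, w i • (w i)⁻¹ • χ i :=
      Finset.sum_congr rfl fun i hi => by
        rw [smul_inv_smul₀ (Finset.mem_filter.1 hi).2.ne']
    rw [this]
    refine (convex_convexHull ℝ _).sum_mem (fun i _ => (hz i).2) hpos fun i hi => ?_
    have hwi := (Finset.mem_filter.1 hi).2
    exact subset_convexHull ℝ _ (Set.mem_iUnion.2 ⟨i,
      inv_smul_mem_of_mulVec_le_smul (hP i) hwi (hz i).1⟩)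
  have hrecession : ∀ j, ∑ i with ¬0 < w i, χ i ∈ recCone (P j) := by
    intro j
    refine sum_mem_recCone _ fun i hi => ?_
    have hwi : w i = 0 := ((hz i).2.eq_or_lt.resolve_right (Finset.mem_filter.1 hi).2).symm
    rw [hrec j i]
    exact mem_recCone_of_mulVec_le_zero (hP i) (by simpa [hwi] using (hz i).1)
  rw [← Finset.sum_filter_add_sum_filter_not _ (fun i => 0 < w i)]
  exact add_mem_convexHull_iUnion hhull hrecession

theorem convexHull_iUnion_eq_balasSet
    (hP : ∀ i, P i = {x | ∃ y, A i *ᵥ x + B i *ᵥ y ≤ b i})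
    (hrec : ∀ i j, recCone (P i) = recCone (P j)) :
    convexHull ℝ (⋃ i, P i) = balasSet A B b :=
  (convexHull_min (Set.iUnion_subset (subset_balasSet hP)) convex_balasSet).antisymm
    (balasSet_subset_convexHull hP hrec)

theorem isEF_balasSet (ht : 1 ≤ t) : IsEF (balasSet A B b) (∑ i, m i + t) := by
  have hcard : Fintype.card ((Σ i, Fin (m i)) ⊕ Fin t) = ∑ i, m i + t := by simp
  rw [← hcard]
  convert isEF_of_surjective (balasMap A B b) 0 balasProj (balasProj_surjective ht)
    (LinearMap.inl ℝ (Fin n → ℝ) ℝ) (0, 1) using 1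
  ext x
  simp [balasSet, balasCone]

end Balas

/-- Balas' theorem: for polyhedra `P₁, …, P_t` with identical recession cones,
`conv(P₁ ∪ ⋯ ∪ P_t)` is a polyhedron with
`xc ≤ ∑ xc(Pᵢ) + t`. -/
theorem balas_union {n t : ℕ} (ht : 1 ≤ t) (P : Fin t → Set (Fin n → ℝ))
    (hpoly : ∀ i, IsPolyhedron (P i))
    (hrec : ∀ i j, recCone (P i) = recCone (P j)) :
    IsPolyhedron (convexHull ℝ (⋃ i, P i)) ∧
    xc (convexHull ℝ (⋃ i, P i)) ≤ (∑ i, xc (P i)) + t := by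
  choose k A B b hP using fun i => (hpoly i).isEF_xc
  have hEF : IsEF (convexHull ℝ (⋃ i, P i)) ((∑ i, xc (P i)) + t) := by
    rw [convexHull_iUnion_eq_balasSet hP hrec]
    exact isEF_balasSet ht
  exact ⟨hEF.isPolyhedron, Nat.sInf_le hEF⟩
end

section
/- Let G be a graph and suppose x* is an optimal solution to the fractional stable set LP max{ w(x) : x(v)+x(u) ≤ 1 for all edges uv, 0 ≤ x ≤ 1 } with 0 < x*(v) < 1 for all v. Then w, viewed as a vector in ℝ^V, is a nonnegative combination of the rows of the edge-node incidence matrix M; equivalently, w is edge-induced. -/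
/-!
By Farkas' lemma it suffices to show that `∑ v, w v * d v ≤ 0` for every direction `d` with
`d u + d v ≤ 0` on all edges. Moving from `x*` along such a `d` keeps the edge constraints, and
since `x*` lies in the open box `(0, 1)^V`, the point `x* + ε d` is feasible for some `ε > 0`;
optimality of `x*` then gives `ε * ∑ v, w v * d v ≤ 0`.

Farkas' lemma is proved by induction on the generators: if the last generator `a` is needed, a
functional `φ₀` separating `w` from the other generators has `φ₀ a > 0`, and projecting along `a`
onto `ker φ₀` removes `a` while preserving the hypothesis.
-/

open Finset Filter Topology

theorem sum_insert_update_smul {R M ι : Type*} [Semiring R] [AddCommMonoid M] [Module R M]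
    [DecidableEq ι] {s : Finset ι} {a : ι} (ha : a ∉ s) (t : ι → R) (r : R) (f : ι → M) :
    ∑ i ∈ insert a s, Function.update t a r i • f i = r • f a + ∑ i ∈ s, t i • f i := by
  rw [sum_insert ha, Function.update_self]
  congr 1
  exact sum_congr rfl fun i hi ↦ by rw [Function.update_of_ne (ne_of_mem_of_not_mem hi ha)]

theorem exists_nonneg_sum_smul_eq_of_dual_nonpos {K E ι : Type*} [Field K] [LinearOrder K]
    [IsStrictOrderedRing K] [AddCommGroup E] [Module K E] (s : Finset ι) (f : ι → E) {w : E}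
    (h : ∀ φ : Module.Dual K E, (∀ i ∈ s, φ (f i) ≤ 0) → φ w ≤ 0) :
    ∃ t : ι → K, (∀ i, 0 ≤ t i) ∧ ∑ i ∈ s, t i • f i = w := by
  classical
  induction s using Finset.induction_on generalizing f w with
  | empty =>
    have hw : w = 0 := (Module.forall_dual_apply_eq_zero_iff K w).1 fun φ ↦
      le_antisymm (h φ (by simp)) (by simpa using h (-φ) (by simp))
    exact ⟨0, fun _ ↦ le_rfl, by simp [hw]⟩
  | insert a s ha ih =>
    by_cases hs : ∀ φ : Module.Dual K E, (∀ i ∈ s, φ (f i) ≤ 0) → φ w ≤ 0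
    · obtain ⟨t, ht, rfl⟩ := ih f hs
      refine ⟨Function.update t a 0, fun i ↦ ?_, ?_⟩
      · rcases eq_or_ne i a with rfl | hi <;> simp [*]
      · rw [sum_insert_update_smul ha, zero_smul, zero_add]
    push Not at hs
    obtain ⟨φ₀, hφ₀s, hφ₀w⟩ := hs
    have hq : 0 < φ₀ (f a) := by
      by_contra! hq
      exact (h φ₀ (forall_mem_insert _ _ _ |>.2 ⟨hq, hφ₀s⟩)).not_gt hφ₀w
    set P : E →ₗ[K] E := LinearMap.id - ((φ₀ (f a))⁻¹ • φ₀).smulRight (f a) with hPdef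
    have hPa : P (f a) = 0 := by simp [hPdef, hq.ne']
    have hP : ∀ x, P x = 0 → x = ((φ₀ (f a))⁻¹ * φ₀ x) • f a := by
      intro x hx
      simpa [hPdef, sub_eq_zero, mul_smul] using hx
    obtain ⟨t, ht, hsum⟩ := ih (P ∘ f) (w := P w) fun φ hφ ↦ by
      simpa using h (φ ∘ₗ P) (forall_mem_insert _ _ _ |>.2 ⟨by simp [hPa], hφ⟩)
    set r := (φ₀ (f a))⁻¹ * φ₀ (w - ∑ i ∈ s, t i • f i)
    have hr : 0 ≤ r := by
      refine mul_nonneg (inv_nonneg.2 hq.le) ?_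
      rw [map_sub, map_sum]
      have : ∑ i ∈ s, φ₀ (t i • f i) ≤ 0 :=
        sum_nonpos fun i hi ↦ by simpa using mul_nonpos_of_nonneg_of_nonpos (ht i) (hφ₀s i hi)
      linarith
    refine ⟨Function.update t a r, fun i ↦ ?_, ?_⟩
    · rcases eq_or_ne i a with rfl | hi <;> simp [*]
    · have hw : w - ∑ i ∈ s, t i • f i = r • f a := hP _ (by simp [map_sum, ← hsum])
      rw [sum_insert_update_smul ha, ← hw, sub_add_cancel]

theorem Module.Dual.apply_eq_sum_mul_single {ι R : Type*} [Fintype ι] [DecidableEq ι]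
    [CommSemiring R] (φ : Module.Dual R (ι → R)) (x : ι → R) :
    φ x = ∑ i, x i * φ (Pi.single i 1) := by
  conv_lhs => rw [← univ_sum_single x, map_sum]
  refine sum_congr rfl fun i _ ↦ ?_
  rw [← smul_eq_mul, ← map_smul, ← Pi.single_smul, smul_eq_mul, mul_one]

theorem IsOpen.exists_pos_add_smul_mem {E : Type*} [TopologicalSpace E] [AddCommGroup E]
    [Module ℝ E] [ContinuousAdd E] [ContinuousSMul ℝ E] {U : Set E} (hU : IsOpen U) {x : E}
    (hx : x ∈ U) (d : E) : ∃ ε : ℝ, 0 < ε ∧ x + ε • d ∈ U := by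
  have hline : Tendsto (fun ε : ℝ ↦ x + ε • d) (𝓝[>] 0) (𝓝 x) := by
    apply tendsto_nhdsWithin_of_tendsto_nhds
    simpa using ((continuous_id.smul continuous_const).const_add x).tendsto (0 : ℝ)
  obtain ⟨ε, hεU, hε⟩ := ((hline.eventually (hU.mem_nhds hx)).and self_mem_nhdsWithin).exists
  exact ⟨ε, hε, hεU⟩

namespace SimpleGraph

variable {V : Type*} (G : SimpleGraph V)

/-- Row of the edge-node incidence matrix, indexed by ordered pairs (non-edges give `0`). -/
def incidenceRow [DecidableEq V] [DecidableRel G.Adj] (p : V × V) : V → ℝ :=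
  if G.Adj p.1 p.2 then Pi.single p.1 1 + Pi.single p.2 1 else 0

theorem sum_smul_incidenceRow_apply [Fintype V] [DecidableEq V] [DecidableRel G.Adj]
    (t : V × V → ℝ) (v : V) :
    (∑ p, t p • G.incidenceRow p) v = ∑ u, if G.Adj v u then t (v, u) + t (u, v) else 0 := by
  have hsplit : ∀ a b : V, (t (a, b) • G.incidenceRow (a, b)) v
      = (if v = a then if G.Adj a b then t (a, b) else 0 else 0)
        + (if v = b then if G.Adj a b then t (a, b) else 0 else 0) := by
    intro a b
    by_cases hab : G.Adj a b
    · have hba : b ≠ a := hab.ne.symm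
      by_cases ha : v = a <;> by_cases hb : v = b <;> simp_all [incidenceRow]
    · simp [incidenceRow, hab]
  simp only [Finset.sum_apply, Fintype.sum_prod_type, hsplit, sum_add_distrib, sum_ite_eq,
    mem_univ, if_true]
  simp only [sum_ite_irrel, sum_const_zero, sum_ite_eq, mem_univ, if_true, ← sum_add_distrib,
    G.adj_comm _ v]
  exact sum_congr rfl fun u _ ↦ by split_ifs <;> simp

theorem sum_mul_nonpos_of_adj_add_nonpos [Fintype V] (w : V → ℝ) (xs : V → ℝ)
    (hfeas : ∀ v u : V, G.Adj v u → xs v + xs u ≤ 1)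
    (hint : ∀ v, 0 < xs v ∧ xs v < 1)
    (hopt : ∀ x : V → ℝ, (∀ v, 0 ≤ x v ∧ x v ≤ 1) →
      (∀ v u : V, G.Adj v u → x v + x u ≤ 1) →
      ∑ v, w v * x v ≤ ∑ v, w v * xs v)
    {d : V → ℝ} (hd : ∀ v u, G.Adj v u → d v + d u ≤ 0) :
    ∑ v, w v * d v ≤ 0 := by
  have hU : IsOpen (Set.univ.pi fun _ : V ↦ Set.Ioo (0 : ℝ) 1) :=
    isOpen_set_pi Set.finite_univ fun _ _ ↦ isOpen_Ioo
  obtain ⟨ε, hε, hmem⟩ := hU.exists_pos_add_smul_mem (by simpa using hint) d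
  simp only [Set.mem_pi, Set.mem_univ, true_implies, Pi.add_apply, Pi.smul_apply,
    smul_eq_mul, Set.mem_Ioo] at hmem
  have hle : w ⬝ᵥ (xs + ε • d) ≤ w ⬝ᵥ xs :=
    hopt _ (fun v ↦ ⟨(hmem v).1.le, (hmem v).2.le⟩) fun v u huv ↦ by
      simp only [Pi.add_apply, Pi.smul_apply, smul_eq_mul]
      nlinarith [hfeas v u huv, hd v u huv]
  rw [dotProduct_add, dotProduct_smul, smul_eq_mul] at hle
  exact nonpos_of_mul_nonpos_right (b := w ⬝ᵥ d) (by linarith) hε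

end SimpleGraph

/-- If `x*` is an optimal solution of the fractional stable set LP with
`0 < x*(v) < 1` for every node `v`, then `w` is a nonnegative combination of the
rows of the edge-node incidence matrix, i.e. `w` is edge-induced. -/
theorem interior_optimum_implies_edge_induced {V : Type*} [Fintype V]
    (G : SimpleGraph V) (w : V → ℝ) (xs : V → ℝ)
    (hfeas : ∀ v u : V, G.Adj v u → xs v + xs u ≤ 1)
    (hint : ∀ v, 0 < xs v ∧ xs v < 1)
    (hopt : ∀ x : V → ℝ, (∀ v, 0 ≤ x v ∧ x v ≤ 1) →
      (∀ v u : V, G.Adj v u → x v + x u ≤ 1) →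
      ∑ v, w v * x v ≤ ∑ v, w v * xs v) :
    ∃ c : V → V → ℝ, (∀ u v, 0 ≤ c u v) ∧ (∀ u v, c u v = c v u) ∧
      (∀ u v, ¬ G.Adj u v → c u v = 0) ∧ ∀ v, w v = ∑ u, c v u := by
  classical
  obtain ⟨t, ht, hw⟩ := exists_nonneg_sum_smul_eq_of_dual_nonpos (K := ℝ) univ G.incidenceRow
    (w := w) fun φ hφ ↦ by
      rw [φ.apply_eq_sum_mul_single]
      refine G.sum_mul_nonpos_of_adj_add_nonpos w xs hfeas hint hopt fun v u huv ↦ ?_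
      simpa [SimpleGraph.incidenceRow, huv] using hφ (v, u) (mem_univ _)
  refine ⟨fun u v ↦ if G.Adj u v then t (u, v) + t (v, u) else 0, fun u v ↦ ?_, fun u v ↦ ?_,
    fun u v huv ↦ if_neg huv, fun v ↦ ?_⟩
  · dsimp only
    split_ifs
    exacts [add_nonneg (ht _) (ht _), le_rfl]
  · simp only [G.adj_comm u v, add_comm]
  · rw [← hw, G.sum_smul_incidenceRow_apply]
end
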